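/- Let L > 0 and let V̂ : ℝ³ → ℝ satisfy 𝔟 := sup_{k∈ℤ³} |V̂(2πk/L)| < ∞. For c : ℤ³ → ℂ with ‖c‖_{𝔄²} < ∞, define the Hartree nonlinearity N(c)(m) := Σ_{k∈ℤ³} V̂(2πk/L)·β_c(k)·c(m−k), where β_c is the autocorrelation of c. Then for all a, b : ℤ³ → ℂ with ‖a‖_{𝔄²}, ‖b‖_{𝔄²} < ∞ one has ‖N(a) − N(b)‖_{𝔄²} ≤ (16𝔟/9)·(‖a‖_{𝔄²}² + ‖a‖_{𝔄²}·‖b‖_{𝔄²} + ‖b‖_{𝔄²}²)·‖a − b‖_{𝔄²}. -/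

import Mathlib

open scoped BigOperators

noncomputable section

/-- Squared Euclidean norm of a lattice point `n ∈ ℤ³`. -/
def znormSq (n : Fin 3 → ℤ) : ℝ := ∑ i, ((n i : ℝ)) ^ 2

/-- The weight `1 + 4π²|m|²/L²` of the weighted Wiener algebra `𝔄²(Λ_L)`. -/
def wienerWeight (L : ℝ) (m : Fin 3 → ℤ) : ℝ :=
  1 + 4 * Real.pi ^ 2 * znormSq m / L ^ 2

/-- Finiteness of the weighted Wiener norm `‖a‖_{𝔄²} < ∞`. -/
def WienerSummable (L : ℝ) (a : (Fin 3 → ℤ) → ℂ) : Prop :=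
  Summable fun m => wienerWeight L m * ‖a m‖

/-- The weighted Wiener norm `‖a‖_{𝔄²} = Σ_m (1 + 4π²|m|²/L²)·|a(m)|`. -/
def wienerNorm (L : ℝ) (a : (Fin 3 → ℤ) → ℂ) : ℝ :=
  ∑' m, wienerWeight L m * ‖a m‖

/-- Autocorrelation `β(k) = Σ_m conj(α(m))·α(m+k)` of a family `α : ℤ³ → ℂ`. -/
def autocorr (a : (Fin 3 → ℤ) → ℂ) (k : Fin 3 → ℤ) : ℂ :=
  ∑' m, (starRingEnd ℂ) (a m) * a (m + k)

/-- The sampled Fourier transform of the potential at momentum `2πk/L`. -/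
def Vk (L : ℝ) (Vhat : (Fin 3 → ℝ) → ℝ) (k : Fin 3 → ℤ) : ℝ :=
  Vhat fun i => 2 * Real.pi * (k i : ℝ) / L

/-- The Hartree nonlinearity in momentum space:
`N(c)(m) = Σ_k V̂(2πk/L)·β_c(k)·c(m−k)`. -/
def hartreeNL (L : ℝ) (Vhat : (Fin 3 → ℝ) → ℝ) (c : (Fin 3 → ℤ) → ℂ)
    (m : Fin 3 → ℤ) : ℂ :=
  ∑' k, (Vk L Vhat k : ℂ) * autocorr c k * c (m - k)

/- ----------------- auxiliary lemmas ----------------- -/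

lemma aux_tri (s t u : ℝ) : 9*(1+(s+t+u)^2) ≤ 16*((1+s^2)*((1+t^2)*(1+u^2))) := by
  have h1 : 3*(1+(s+t)^2) ≤ 4*((1+s^2)*(1+t^2)) := by
    nlinarith [sq_nonneg (1-2*s*t), sq_nonneg (s-t)]
  have h2 : 3*(1+((s+t)+u)^2) ≤ 4*((1+(s+t)^2)*(1+u^2)) := by
    nlinarith [sq_nonneg (1-2*(s+t)*u), sq_nonneg (s+t-u)]
  have hu : (0:ℝ) ≤ 1+u^2 := by positivity
  nlinarith [h1, h2, hu, mul_nonneg hu (sq_nonneg (1-2*s*t)), mul_nonneg hu (sq_nonneg (s-t))]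

/-- embedding of the lattice into Euclidean space -/
def aux_iota (n : Fin 3 → ℤ) : EuclideanSpace ℝ (Fin 3) := WithLp.toLp 2 (fun i => (n i : ℝ))

lemma aux_znormSq_eq (n : Fin 3 → ℤ) : znormSq n = ‖aux_iota n‖^2 := by
  rw [EuclideanSpace.norm_eq]
  rw [Real.sq_sqrt (by positivity)]
  simp [znormSq, aux_iota, Real.norm_eq_abs, sq_abs]

lemma aux_iota_add (x y : Fin 3 → ℤ) : aux_iota (x + y) = aux_iota x + aux_iota y := by
  ext i; simp [aux_iota]

lemma aux_znormSq_nonneg (n : Fin 3 → ℤ) : 0 ≤ znormSq n := by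
  unfold znormSq; positivity

lemma weight_one_le (L : ℝ) (m : Fin 3 → ℤ) : 1 ≤ wienerWeight L m := by
  have h := aux_znormSq_nonneg m
  unfold wienerWeight
  have : 0 ≤ 4 * Real.pi ^ 2 * znormSq m / L ^ 2 := by positivity
  linarith

lemma weight_nonneg (L : ℝ) (m : Fin 3 → ℤ) : 0 ≤ wienerWeight L m :=
  le_trans zero_le_one (weight_one_le L m)

lemma weight_neg (L : ℝ) (p : Fin 3 → ℤ) : wienerWeight L (-p) = wienerWeight L p := by
  unfold wienerWeight znormSq
  simp

lemma weight3 (L : ℝ) (x y z : Fin 3 → ℤ) :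
    wienerWeight L (x + y + z)
      ≤ 16/9 * (wienerWeight L x * (wienerWeight L y * wienerWeight L z)) := by
  set A := 4 * Real.pi ^ 2 / L ^ 2 with hA
  have hA0 : 0 ≤ A := by positivity
  have hw : ∀ n, wienerWeight L n = 1 + (Real.sqrt A * ‖aux_iota n‖)^2 := by
    intro n
    have : (Real.sqrt A * ‖aux_iota n‖)^2 = A * znormSq n := by
      rw [mul_pow, Real.sq_sqrt hA0, aux_znormSq_eq]
    rw [this, wienerWeight, hA]
    ring
  rw [hw, hw, hw, hw]
  set s := Real.sqrt A * ‖aux_iota x‖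
  set t := Real.sqrt A * ‖aux_iota y‖
  set u := Real.sqrt A * ‖aux_iota z‖
  have hle : Real.sqrt A * ‖aux_iota (x+y+z)‖ ≤ s + t + u := by
    rw [aux_iota_add, aux_iota_add]
    calc Real.sqrt A * ‖aux_iota x + aux_iota y + aux_iota z‖
        ≤ Real.sqrt A * (‖aux_iota x‖ + ‖aux_iota y‖ + ‖aux_iota z‖) := by
          apply mul_le_mul_of_nonneg_left _ (Real.sqrt_nonneg A)
          exact norm_add₃_le
      _ = s + t + u := by ring
  have h2 : (Real.sqrt A * ‖aux_iota (x+y+z)‖)^2 ≤ (s+t+u)^2 := by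
    apply sq_le_sq' _ hle
    nlinarith [mul_nonneg (Real.sqrt_nonneg A) (norm_nonneg (aux_iota (x+y+z)))]
  nlinarith [aux_tri s t u, h2]

lemma aux_ofReal_tsum_le {ι : Type*} (f : ι → ℝ) (hf : ∀ i, 0 ≤ f i) :
    ENNReal.ofReal (∑' i, f i) ≤ ∑' i, ENNReal.ofReal (f i) := by
  by_cases h : Summable f
  · rw [ENNReal.ofReal_tsum_of_nonneg hf h]
  · rw [tsum_eq_zero_of_not_summable h]; simp

/-- unconditional factorization of the convolution-type triple sum in `ℝ≥0∞`. -/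
lemma aux_tsum_fact (f g h : (Fin 3 → ℤ) → ENNReal) :
    ∑' (m : Fin 3 → ℤ), ∑' (k : Fin 3 → ℤ), ∑' (p : Fin 3 → ℤ),
        f p * (g (p + k) * h (m - k))
      = (∑' q, f q) * ((∑' q, g q) * (∑' q, h q)) := by
  rw [ENNReal.tsum_comm]
  have step1 : ∀ k : Fin 3 → ℤ, ∀ m : Fin 3 → ℤ,
      ∑' p, f p * (g (p + k) * h (m - k)) = (∑' p, f p * g (p + k)) * h (m - k) := by
    intro k m
    rw [← ENNReal.tsum_mul_right]
    exact tsum_congr fun p => by rw [mul_assoc]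
  calc ∑' (k) (m) (p), f p * (g (p + k) * h (m - k))
      = ∑' (k : Fin 3 → ℤ), ∑' (m : Fin 3 → ℤ), (∑' p, f p * g (p + k)) * h (m - k) := by
        exact tsum_congr fun k => tsum_congr fun m => step1 k m
    _ = ∑' (k : Fin 3 → ℤ), (∑' p, f p * g (p + k)) * (∑' m, h (m - k)) := by
        exact tsum_congr fun k => ENNReal.tsum_mul_left
    _ = ∑' (k : Fin 3 → ℤ), (∑' p, f p * g (p + k)) * (∑' q, h q) := by
        refine tsum_congr fun k => ?_
        congr 1
        exact (Equiv.subRight k).tsum_eq h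
    _ = (∑' (k : Fin 3 → ℤ), ∑' p, f p * g (p + k)) * (∑' q, h q) := by
        rw [ENNReal.tsum_mul_right]
    _ = (∑' (p : Fin 3 → ℤ), ∑' k, f p * g (p + k)) * (∑' q, h q) := by
        rw [ENNReal.tsum_comm]
    _ = (∑' (p : Fin 3 → ℤ), f p * ∑' k, g (p + k)) * (∑' q, h q) := by
        congr 1
        exact tsum_congr fun p => ENNReal.tsum_mul_left
    _ = (∑' (p : Fin 3 → ℤ), f p * ∑' q, g q) * (∑' q, h q) := by
        congr 1
        refine tsum_congr fun p => ?_
        congr 1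
        exact (Equiv.addLeft p).tsum_eq g
    _ = (∑' q, f q) * ((∑' q, g q) * (∑' q, h q)) := by
        rw [ENNReal.tsum_mul_right, mul_assoc]

set_option maxHeartbeats 2000000 in
/-- Lipschitz bound for the Hartree nonlinearity in the weighted
Wiener algebra: with `𝔟 = sup_{k∈ℤ³} |V̂(2πk/L)|`,
`‖N(a) − N(b)‖_{𝔄²} ≤ (16𝔟/9)·(‖a‖² + ‖a‖·‖b‖ + ‖b‖²)·‖a − b‖_{𝔄²}`. -/
theorem stmt2 (L b : ℝ) (hL : 0 < L)
    (Vhat : (Fin 3 → ℝ) → ℝ)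
    (hb : IsLUB (Set.range fun k : Fin 3 → ℤ => |Vk L Vhat k|) b)
    (a c : (Fin 3 → ℤ) → ℂ)
    (ha : WienerSummable L a) (hc : WienerSummable L c) :
    wienerNorm L (fun m => hartreeNL L Vhat a m - hartreeNL L Vhat c m)
      ≤ (16 * b / 9) *
          (wienerNorm L a ^ 2 + wienerNorm L a * wienerNorm L c + wienerNorm L c ^ 2) *
          wienerNorm L (fun m => a m - c m) := by
  classical
  set w := wienerWeight L with hw_def
  have hw1 : ∀ m, (1:ℝ) ≤ w m := weight_one_le L
  have hw0 : ∀ m, (0:ℝ) ≤ w m := weight_nonneg L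
  have hVle : ∀ k, |Vk L Vhat k| ≤ b := fun k => hb.1 ⟨k, rfl⟩
  have hb0 : 0 ≤ b := le_trans (abs_nonneg _) (hVle 0)
  set d : (Fin 3 → ℤ) → ℂ := fun m => a m - c m with hd_def
  -- d is Wiener-summable
  have hd : WienerSummable L d := by
    rw [WienerSummable]
    apply Summable.of_nonneg_of_le (fun m => mul_nonneg (hw0 m) (norm_nonneg _))
      (f := fun m => w m * ‖a m‖ + w m * ‖c m‖) _ (ha.add hc)
    intro m
    have h1 : ‖d m‖ ≤ ‖a m‖ + ‖c m‖ := by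
      simpa [hd_def] using norm_sub_le (a m) (c m)
    show w m * ‖d m‖ ≤ w m * ‖a m‖ + w m * ‖c m‖
    nlinarith [hw0 m, h1]
  -- ℓ¹ summability
  have habs : ∀ x : (Fin 3 → ℤ) → ℂ, WienerSummable L x →
      Summable (fun m => ‖x m‖) := by
    intro x hx
    rw [WienerSummable] at hx
    apply Summable.of_nonneg_of_le (fun m => by positivity) _ hx
    intro m
    exact le_mul_of_one_le_left (by positivity) (hw1 m)
  have hA1 : Summable (fun m => ‖a m‖) := habs a ha
  have hC1 : Summable (fun m => ‖c m‖) := habs c hc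
  have hD1 : Summable (fun m => ‖d m‖) := habs d hd
  set Sa := ∑' m, ‖a m‖ with hSa_def
  set Sc := ∑' m, ‖c m‖ with hSc_def
  set Sd := ∑' m, ‖d m‖ with hSd_def
  have hbndA : ∀ q, ‖a q‖ ≤ Sa := fun q => hA1.le_tsum q (fun j _ => by positivity)
  have hbndC : ∀ q, ‖c q‖ ≤ Sc := fun q => hC1.le_tsum q (fun j _ => by positivity)
  have hbndD : ∀ q, ‖d q‖ ≤ Sd := fun q => hD1.le_tsum q (fun j _ => by positivity)
  have hSa0 : 0 ≤ Sa := tsum_nonneg (fun _ => by positivity)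
  have hSc0 : 0 ≤ Sc := tsum_nonneg (fun _ => by positivity)
  -- shifted summability
  have hshift_sub : ∀ (f : (Fin 3 → ℤ) → ℝ), Summable f → ∀ m, Summable (fun k => f (m - k)) :=
    fun f hf m => hf.comp_injective sub_right_injective
  have hshift_add : ∀ (f : (Fin 3 → ℤ) → ℝ), Summable f → ∀ k, Summable (fun p => f (p + k)) :=
    fun f hf k => hf.comp_injective (add_left_injective k)
  -- summability of autocorr-type products
  have hprod : ∀ (x y : (Fin 3 → ℤ) → ℂ), Summable (fun m => ‖x m‖) →
      (∀ q, ‖y q‖ ≤ ∑' m, ‖y m‖) → ∀ k,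
      Summable (fun p => ‖x p‖ * ‖y (p + k)‖) := by
    intro x y hx hy k
    apply Summable.of_nonneg_of_le (fun p => by positivity)
      (f := fun p => ‖x p‖ * (∑' m, ‖y m‖)) _ (hx.mul_right _)
    intro p
    exact mul_le_mul_of_nonneg_left (hy (p + k)) (by positivity)
  have hsum_aa : ∀ k, Summable (fun p => (starRingEnd ℂ) (a p) * a (p + k)) := by
    intro k
    apply Summable.of_norm_bounded (hprod a a hA1 hbndA k)
    intro p
    simp [map_mul]
  have hsum_cc : ∀ k, Summable (fun p => (starRingEnd ℂ) (c p) * c (p + k)) := by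
    intro k
    apply Summable.of_norm_bounded (hprod c c hC1 hbndC k)
    intro p
    simp [map_mul]
  -- uniform bounds on autocorrelations
  have hbeta_bound : ∀ (x : (Fin 3 → ℤ) → ℂ), Summable (fun m => ‖x m‖) →
      (∀ q, ‖x q‖ ≤ ∑' m, ‖x m‖) → ∀ k,
      ‖autocorr x k‖ ≤ (∑' m, ‖x m‖) * (∑' m, ‖x m‖) := by
    intro x hx hxb k
    have hsum : Summable (fun p => (starRingEnd ℂ) (x p) * x (p + k)) := by
      apply Summable.of_norm_bounded (hprod x x hx hxb k)
      intro p; simp [map_mul]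
    have hnorm : Summable (fun p => ‖(starRingEnd ℂ) (x p) * x (p + k)‖) := by
      apply Summable.of_nonneg_of_le (fun p => norm_nonneg _) _ (hprod x x hx hxb k)
      intro p; simp [map_mul]
    calc ‖autocorr x k‖ ≤ ∑' p, ‖(starRingEnd ℂ) (x p) * x (p + k)‖ :=
          norm_tsum_le_tsum_norm hnorm
      _ ≤ ∑' p, ‖x p‖ * (∑' m, ‖x m‖) := by
          apply Summable.tsum_le_tsum _ hnorm (hx.mul_right _)
          intro p
          have heq : ‖(starRingEnd ℂ) (x p) * x (p + k)‖
              = ‖x p‖ * ‖x (p + k)‖ := by simp [map_mul]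
          rw [heq]
          exact mul_le_mul_of_nonneg_left (hxb (p+k)) (by positivity)
      _ = (∑' m, ‖x m‖) * (∑' m, ‖x m‖) := by
          rw [tsum_mul_right]
  have hbeta_a : ∀ k, ‖autocorr a k‖ ≤ Sa * Sa := hbeta_bound a hA1 hbndA
  have hbeta_c : ∀ k, ‖autocorr c k‖ ≤ Sc * Sc := hbeta_bound c hC1 hbndC
  -- summability of the Hartree series and its norms
  have hHsum : ∀ (x : (Fin 3 → ℤ) → ℂ) (Sx : ℝ), 0 ≤ Sx →
      Summable (fun m => ‖x m‖) →
      (∀ k, ‖autocorr x k‖ ≤ Sx * Sx) → ∀ m,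
      Summable (fun k => ‖(Vk L Vhat k : ℂ) * autocorr x k * x (m - k)‖) := by
    intro x Sx hSx hx hxb m
    apply Summable.of_nonneg_of_le (fun k => norm_nonneg _)
      (f := fun k => (b * (Sx * Sx)) * ‖x (m - k)‖) _
      ((hshift_sub _ hx m).mul_left _)
    intro k
    simp only [norm_mul]
    have h1 : ‖(Vk L Vhat k : ℂ)‖ ≤ b := by
      rw [Complex.norm_real]
      exact hVle k
    have h2 : ‖autocorr x k‖ ≤ Sx * Sx := hxb k
    have h3 : (0:ℝ) ≤ ‖x (m - k)‖ := norm_nonneg _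
    calc ‖(Vk L Vhat k : ℂ)‖ * ‖autocorr x k‖ * ‖x (m-k)‖
        ≤ b * (Sx * Sx) * ‖x (m-k)‖ := by
          apply mul_le_mul_of_nonneg_right _ h3
          exact mul_le_mul h1 h2 (norm_nonneg _) hb0
      _ = b * (Sx * Sx) * ‖x (m-k)‖ := rfl
  have hHa : ∀ m, Summable (fun k => (Vk L Vhat k : ℂ) * autocorr a k * a (m - k)) :=
    fun m => Summable.of_norm (hHsum a Sa hSa0 hA1 hbeta_a m)
  have hHc : ∀ m, Summable (fun k => (Vk L Vhat k : ℂ) * autocorr c k * c (m - k)) :=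
    fun m => Summable.of_norm (hHsum c Sc hSc0 hC1 hbeta_c m)
  -- the difference of nonlinearities as a single sum
  set e := fun (m k : Fin 3 → ℤ) => (Vk L Vhat k : ℂ) * (autocorr a k * a (m - k) - autocorr c k * c (m - k))
    with he_def
  have hΔ : ∀ m, hartreeNL L Vhat a m - hartreeNL L Vhat c m = ∑' k, e m k := by
    intro m
    rw [hartreeNL, hartreeNL, ← Summable.tsum_sub (hHa m) (hHc m)]
    exact tsum_congr fun k => by rw [he_def]; ring
  have he_norm_sum : ∀ m, Summable (fun k => ‖e m k‖) := by
    intro m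
    apply Summable.of_nonneg_of_le (fun k => norm_nonneg _)
      (f := fun k => ‖(Vk L Vhat k : ℂ) * autocorr a k * a (m - k)‖
          + ‖(Vk L Vhat k : ℂ) * autocorr c k * c (m - k)‖) _
      ((hHsum a Sa hSa0 hA1 hbeta_a m).add (hHsum c Sc hSc0 hC1 hbeta_c m))
    intro k
    rw [he_def]
    calc ‖(Vk L Vhat k : ℂ) * (autocorr a k * a (m-k) - autocorr c k * c (m-k))‖
        = ‖(Vk L Vhat k : ℂ) * autocorr a k * a (m-k)
            - (Vk L Vhat k : ℂ) * autocorr c k * c (m-k)‖ := by ring_nf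
      _ ≤ _ := norm_sub_le _ _
  -- pointwise bounds for the autocorrelation difference
  set Bd := fun (k : Fin 3 → ℤ) => ∑' p, (‖d p‖ * ‖a (p + k)‖
      + ‖c p‖ * ‖d (p + k)‖) with hBd_def
  set Bc := fun (k : Fin 3 → ℤ) => ∑' p, ‖c p‖ * ‖c (p + k)‖ with hBc_def
  have hBd_sum : ∀ k, Summable (fun p => ‖d p‖ * ‖a (p + k)‖
      + ‖c p‖ * ‖d (p + k)‖) :=
    fun k => (hprod d a hD1 hbndA k).add (hprod c d hC1 hbndD k)
  have hBd_le : ∀ k, ‖autocorr a k - autocorr c k‖ ≤ Bd k := by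
    intro k
    have heq : autocorr a k - autocorr c k
        = ∑' p, ((starRingEnd ℂ) (d p) * a (p + k) + (starRingEnd ℂ) (c p) * d (p + k)) := by
      rw [autocorr, autocorr, ← Summable.tsum_sub (hsum_aa k) (hsum_cc k)]
      refine tsum_congr fun p => ?_
      simp only [hd_def, map_sub]
      ring
    rw [heq]
    have hnorm : Summable (fun p =>
        ‖(starRingEnd ℂ) (d p) * a (p + k) + (starRingEnd ℂ) (c p) * d (p + k)‖) := by
      apply Summable.of_nonneg_of_le (fun p => norm_nonneg _) _ (hBd_sum k)
      intro p
      calc ‖(starRingEnd ℂ) (d p) * a (p + k) + (starRingEnd ℂ) (c p) * d (p + k)‖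
          ≤ ‖(starRingEnd ℂ) (d p) * a (p + k)‖ + ‖(starRingEnd ℂ) (c p) * d (p + k)‖ :=
            norm_add_le _ _
        _ = ‖d p‖ * ‖a (p + k)‖
            + ‖c p‖ * ‖d (p + k)‖ := by simp [map_mul]
    calc ‖∑' p, ((starRingEnd ℂ) (d p) * a (p + k) + (starRingEnd ℂ) (c p) * d (p + k))‖
        ≤ ∑' p, ‖(starRingEnd ℂ) (d p) * a (p + k) + (starRingEnd ℂ) (c p) * d (p + k)‖ :=
          norm_tsum_le_tsum_norm hnorm
      _ ≤ Bd k := by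
          apply Summable.tsum_le_tsum _ hnorm (hBd_sum k)
          intro p
          calc ‖(starRingEnd ℂ) (d p) * a (p + k) + (starRingEnd ℂ) (c p) * d (p + k)‖
              ≤ ‖(starRingEnd ℂ) (d p) * a (p + k)‖ + ‖(starRingEnd ℂ) (c p) * d (p + k)‖ :=
                norm_add_le _ _
            _ = _ := by simp [map_mul]
  have hBc_le : ∀ k, ‖autocorr c k‖ ≤ Bc k := by
    intro k
    have hnorm : Summable (fun p => ‖(starRingEnd ℂ) (c p) * c (p + k)‖) := by
      apply Summable.of_nonneg_of_le (fun p => norm_nonneg _) _ (hprod c c hC1 hbndC k)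
      intro p; simp [map_mul]
    calc ‖autocorr c k‖ ≤ ∑' p, ‖(starRingEnd ℂ) (c p) * c (p + k)‖ :=
          norm_tsum_le_tsum_norm hnorm
      _ = Bc k := tsum_congr fun p => by simp [map_mul]
  have hBd0 : ∀ k, 0 ≤ Bd k := fun k => tsum_nonneg (fun p => by positivity)
  have hBc0 : ∀ k, 0 ≤ Bc k := fun k => tsum_nonneg (fun p => by positivity)
  -- per-(m,k) bound
  have hek : ∀ m k, ‖e m k‖
      ≤ b * (Bd k * ‖a (m - k)‖ + Bc k * ‖d (m - k)‖) := by
    intro m k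
    rw [he_def]
    have hsplit : autocorr a k * a (m - k) - autocorr c k * c (m - k)
        = (autocorr a k - autocorr c k) * a (m - k) + autocorr c k * d (m - k) := by
      simp only [hd_def]; ring
    rw [norm_mul, hsplit]
    have h1 : ‖(autocorr a k - autocorr c k) * a (m - k) + autocorr c k * d (m - k)‖
        ≤ Bd k * ‖a (m - k)‖ + Bc k * ‖d (m - k)‖ := by
      calc ‖(autocorr a k - autocorr c k) * a (m - k) + autocorr c k * d (m - k)‖
          ≤ ‖(autocorr a k - autocorr c k) * a (m - k)‖ + ‖autocorr c k * d (m - k)‖ :=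
            norm_add_le _ _
        _ ≤ Bd k * ‖a (m - k)‖ + Bc k * ‖d (m - k)‖ := by
            rw [norm_mul, norm_mul]
            gcongr
            · exact hBd_le k
            · exact hBc_le k
    have h2 : ‖(Vk L Vhat k : ℂ)‖ ≤ b := by rw [Complex.norm_real]; exact hVle k
    exact mul_le_mul h2 h1 (norm_nonneg _) hb0
  -- ENNReal machinery
  set fA := fun q => ENNReal.ofReal (w q * ‖a q‖) with hfA
  set fC := fun q => ENNReal.ofReal (w q * ‖c q‖) with hfC
  set fD := fun q => ENNReal.ofReal (w q * ‖d q‖) with hfD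
  set K := ENNReal.ofReal (16/9*b) with hK
  set NA := wienerNorm L a with hNA_def
  set NC := wienerNorm L c with hNC_def
  set ND := wienerNorm L (fun m => a m - c m) with hND_def
  have hNA0 : 0 ≤ NA := tsum_nonneg (fun m => mul_nonneg (hw0 m) (norm_nonneg _))
  have hNC0 : 0 ≤ NC := tsum_nonneg (fun m => mul_nonneg (hw0 m) (norm_nonneg _))
  have hND0 : 0 ≤ ND := tsum_nonneg (fun m => mul_nonneg (hw0 m) (norm_nonneg _))
  have hwx : ∀ (x : (Fin 3 → ℤ) → ℂ) (q : Fin 3 → ℤ), 0 ≤ w q * ‖x q‖ :=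
    fun x q => mul_nonneg (hw0 q) (norm_nonneg _)
  have hfA_sum : ∑' q, fA q = ENNReal.ofReal NA :=
    (ENNReal.ofReal_tsum_of_nonneg (hwx a) ha).symm
  have hfC_sum : ∑' q, fC q = ENNReal.ofReal NC :=
    (ENNReal.ofReal_tsum_of_nonneg (hwx c) hc).symm
  have hfD_sum : ∑' q, fD q = ENNReal.ofReal ND :=
    (ENNReal.ofReal_tsum_of_nonneg (hwx d) hd).symm
  -- three-factor weighted bounds
  have hw3 : ∀ m k p, w m ≤ 16/9 * (w p * (w (p + k) * w (m - k))) := by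
    intro m k p
    have hsum : (-p) + (p + k) + (m - k) = m := by abel
    have := weight3 L (-p) (p + k) (m - k)
    rw [hsum, hw_def] at *
    rw [weight_neg] at this
    exact this
  -- the three cubic ENNReal terms
  set G1 := fun (m k p : Fin 3 → ℤ) => K * (fD p * (fA (p + k) * fA (m - k))) with hG1
  set G2 := fun (m k p : Fin 3 → ℤ) => K * (fC p * (fD (p + k) * fA (m - k))) with hG2
  set G3 := fun (m k p : Fin 3 → ℤ) => K * (fC p * (fC (p + k) * fD (m - k))) with hG3
  -- per-m key estimate
  have hkey : ∀ m, ENNReal.ofReal (w m * ‖hartreeNL L Vhat a m - hartreeNL L Vhat c m‖)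
      ≤ ∑' k, ∑' p, (G1 m k p + G2 m k p + G3 m k p) := by
    intro m
    have step1 : w m * ‖hartreeNL L Vhat a m - hartreeNL L Vhat c m‖
        ≤ ∑' k, w m * ‖e m k‖ := by
      rw [tsum_mul_left]
      apply mul_le_mul_of_nonneg_left _ (hw0 m)
      rw [hΔ m]
      exact norm_tsum_le_tsum_norm (he_norm_sum m)
    calc ENNReal.ofReal (w m * ‖hartreeNL L Vhat a m - hartreeNL L Vhat c m‖)
        ≤ ENNReal.ofReal (∑' k, w m * ‖e m k‖) := ENNReal.ofReal_le_ofReal step1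
      _ ≤ ∑' k, ENNReal.ofReal (w m * ‖e m k‖) :=
          aux_ofReal_tsum_le _ (fun k => mul_nonneg (hw0 m) (norm_nonneg _))
      _ ≤ ∑' k, ∑' p, (G1 m k p + G2 m k p + G3 m k p) := by
          apply ENNReal.tsum_le_tsum
          intro k
          -- per-k estimate
          have hstep : w m * ‖e m k‖
              ≤ (b * (w m * ‖a (m - k)‖)) * Bd k
                + (b * (w m * ‖d (m - k)‖)) * Bc k := by
            have := mul_le_mul_of_nonneg_left (hek m k) (hw0 m)
            calc w m * ‖e m k‖
                ≤ w m * (b * (Bd k * ‖a (m - k)‖ + Bc k * ‖d (m - k)‖)) :=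
                  this
              _ = (b * (w m * ‖a (m - k)‖)) * Bd k
                  + (b * (w m * ‖d (m - k)‖)) * Bc k := by ring
          calc ENNReal.ofReal (w m * ‖e m k‖)
              ≤ ENNReal.ofReal ((b * (w m * ‖a (m - k)‖)) * Bd k
                  + (b * (w m * ‖d (m - k)‖)) * Bc k) :=
                ENNReal.ofReal_le_ofReal hstep
            _ ≤ ENNReal.ofReal ((b * (w m * ‖a (m - k)‖)) * Bd k)
                + ENNReal.ofReal ((b * (w m * ‖d (m - k)‖)) * Bc k) :=
                ENNReal.ofReal_add_le
            _ ≤ (∑' p, (G1 m k p + G2 m k p)) + ∑' p, G3 m k p := by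
                gcongr
                -- first piece
                · calc ENNReal.ofReal ((b * (w m * ‖a (m - k)‖)) * Bd k)
                      = ENNReal.ofReal (b * (w m * ‖a (m - k)‖))
                        * ENNReal.ofReal (Bd k) := ENNReal.ofReal_mul (mul_nonneg hb0 (mul_nonneg (hw0 m) (norm_nonneg _)))
                    _ ≤ ENNReal.ofReal (b * (w m * ‖a (m - k)‖))
                        * ∑' p, ENNReal.ofReal (‖d p‖ * ‖a (p + k)‖
                            + ‖c p‖ * ‖d (p + k)‖) := by
                        gcongr
                        exact aux_ofReal_tsum_le _ (fun p => by positivity)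
                    _ = ∑' p, ENNReal.ofReal (b * (w m * ‖a (m - k)‖))
                        * ENNReal.ofReal (‖d p‖ * ‖a (p + k)‖
                            + ‖c p‖ * ‖d (p + k)‖) :=
                        (ENNReal.tsum_mul_left).symm
                    _ ≤ ∑' p, (G1 m k p + G2 m k p) := by
                        apply ENNReal.tsum_le_tsum
                        intro p
                        rw [← ENNReal.ofReal_mul (mul_nonneg hb0 (mul_nonneg (hw0 m) (norm_nonneg _)))]
                        have hreal : (b * (w m * ‖a (m - k)‖))
                              * (‖d p‖ * ‖a (p + k)‖
                                + ‖c p‖ * ‖d (p + k)‖)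
                            ≤ (16/9*b) * ((w p * ‖d p‖)
                                * ((w (p+k) * ‖a (p+k)‖)
                                  * (w (m-k) * ‖a (m-k)‖)))
                              + (16/9*b) * ((w p * ‖c p‖)
                                * ((w (p+k) * ‖d (p+k)‖)
                                  * (w (m-k) * ‖a (m-k)‖))) := by
                          have h3 := hw3 m k p
                          have hcoef : 0 ≤ b * (‖d p‖ * ‖a (p + k)‖
                              + ‖c p‖ * ‖d (p + k)‖)
                              * ‖a (m - k)‖ := by positivity
                          have := mul_le_mul_of_nonneg_left h3 hcoef
                          nlinarith [this]
                        calc ENNReal.ofReal _ ≤ ENNReal.ofReal _ := ENNReal.ofReal_le_ofReal hreal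
                          _ ≤ G1 m k p + G2 m k p := by
                              have c1 : (0:ℝ) ≤ 16/9*b := by positivity
                              simp only [hG1, hG2, hK, hfA, hfC, hfD]
                              rw [ENNReal.ofReal_add
                                (mul_nonneg c1 (mul_nonneg (hwx d p)
                                  (mul_nonneg (hwx a _) (hwx a _))))
                                (mul_nonneg c1 (mul_nonneg (hwx c p)
                                  (mul_nonneg (hwx d _) (hwx a _))))]
                              gcongr
                              · rw [ENNReal.ofReal_mul c1,
                                  ENNReal.ofReal_mul (hwx d p),
                                  ENNReal.ofReal_mul (hwx a _)]
                              · rw [ENNReal.ofReal_mul c1,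
                                  ENNReal.ofReal_mul (hwx c p),
                                  ENNReal.ofReal_mul (hwx d _)]
                -- second piece
                · calc ENNReal.ofReal ((b * (w m * ‖d (m - k)‖)) * Bc k)
                      = ENNReal.ofReal (b * (w m * ‖d (m - k)‖))
                        * ENNReal.ofReal (Bc k) := ENNReal.ofReal_mul (mul_nonneg hb0 (mul_nonneg (hw0 m) (norm_nonneg _)))
                    _ ≤ ENNReal.ofReal (b * (w m * ‖d (m - k)‖))
                        * ∑' p, ENNReal.ofReal (‖c p‖ * ‖c (p + k)‖) := by
                        gcongr
                        exact aux_ofReal_tsum_le _ (fun p => by positivity)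
                    _ = ∑' p, ENNReal.ofReal (b * (w m * ‖d (m - k)‖))
                        * ENNReal.ofReal (‖c p‖ * ‖c (p + k)‖) :=
                        (ENNReal.tsum_mul_left).symm
                    _ ≤ ∑' p, G3 m k p := by
                        apply ENNReal.tsum_le_tsum
                        intro p
                        rw [← ENNReal.ofReal_mul (mul_nonneg hb0 (mul_nonneg (hw0 m) (norm_nonneg _)))]
                        have hreal : (b * (w m * ‖d (m - k)‖))
                              * (‖c p‖ * ‖c (p + k)‖)
                            ≤ (16/9*b) * ((w p * ‖c p‖)
                                * ((w (p+k) * ‖c (p+k)‖)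
                                  * (w (m-k) * ‖d (m-k)‖))) := by
                          have h3 := hw3 m k p
                          have hcoef : 0 ≤ b * (‖c p‖ * ‖c (p + k)‖)
                              * ‖d (m - k)‖ := by positivity
                          have := mul_le_mul_of_nonneg_left h3 hcoef
                          nlinarith [this]
                        calc ENNReal.ofReal _ ≤ ENNReal.ofReal _ := ENNReal.ofReal_le_ofReal hreal
                          _ ≤ G3 m k p := by
                              have c1 : (0:ℝ) ≤ 16/9*b := by positivity
                              simp only [hG3, hK, hfA, hfC, hfD]
                              rw [ENNReal.ofReal_mul c1,
                                ENNReal.ofReal_mul (hwx c p),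
                                ENNReal.ofReal_mul (hwx c _)]
            _ = ∑' p, (G1 m k p + G2 m k p + G3 m k p) := (ENNReal.tsum_add).symm
  -- assemble
  have hRHS0 : 0 ≤ (16 * b / 9) * (NA ^ 2 + NA * NC + NC ^ 2) * ND := by
    have : (0:ℝ) ≤ 16 * b / 9 := by positivity
    have h2 : (0:ℝ) ≤ NA ^ 2 + NA * NC + NC ^ 2 := by nlinarith [hNA0, hNC0]
    exact mul_nonneg (mul_nonneg this h2) hND0
  by_cases hS : Summable (fun m => w m * ‖hartreeNL L Vhat a m - hartreeNL L Vhat c m‖)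
  · -- summable case
    have hfact1 : ∑' (m : Fin 3 → ℤ), ∑' (k : Fin 3 → ℤ), ∑' (p : Fin 3 → ℤ), G1 m k p
        = K * (ENNReal.ofReal ND * (ENNReal.ofReal NA * ENNReal.ofReal NA)) := by
      simp only [hG1, ENNReal.tsum_mul_left]
      rw [aux_tsum_fact fD fA fA, hfD_sum, hfA_sum]
    have hfact2 : ∑' (m : Fin 3 → ℤ), ∑' (k : Fin 3 → ℤ), ∑' (p : Fin 3 → ℤ), G2 m k p
        = K * (ENNReal.ofReal NC * (ENNReal.ofReal ND * ENNReal.ofReal NA)) := by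
      simp only [hG2, ENNReal.tsum_mul_left]
      rw [aux_tsum_fact fC fD fA, hfC_sum, hfD_sum, hfA_sum]
    have hfact3 : ∑' (m : Fin 3 → ℤ), ∑' (k : Fin 3 → ℤ), ∑' (p : Fin 3 → ℤ), G3 m k p
        = K * (ENNReal.ofReal NC * (ENNReal.ofReal NC * ENNReal.ofReal ND)) := by
      simp only [hG3, ENNReal.tsum_mul_left]
      rw [aux_tsum_fact fC fC fD, hfC_sum, hfD_sum]
    have hmain : ENNReal.ofReal (wienerNorm L (fun m => hartreeNL L Vhat a m - hartreeNL L Vhat c m))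
        ≤ ENNReal.ofReal ((16 * b / 9) * (NA ^ 2 + NA * NC + NC ^ 2) * ND) := by
      calc ENNReal.ofReal (wienerNorm L (fun m => hartreeNL L Vhat a m - hartreeNL L Vhat c m))
          = ∑' m, ENNReal.ofReal (w m * ‖hartreeNL L Vhat a m - hartreeNL L Vhat c m‖) := by
            rw [wienerNorm]
            exact ENNReal.ofReal_tsum_of_nonneg
              (fun m => mul_nonneg (hw0 m) (norm_nonneg _)) hS
        _ ≤ ∑' (m : Fin 3 → ℤ), ∑' (k : Fin 3 → ℤ), ∑' (p : Fin 3 → ℤ),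
              (G1 m k p + G2 m k p + G3 m k p) := ENNReal.tsum_le_tsum hkey
        _ = (∑' (m : Fin 3 → ℤ), ∑' (k : Fin 3 → ℤ), ∑' (p : Fin 3 → ℤ), G1 m k p)
            + (∑' (m : Fin 3 → ℤ), ∑' (k : Fin 3 → ℤ), ∑' (p : Fin 3 → ℤ), G2 m k p)
            + (∑' (m : Fin 3 → ℤ), ∑' (k : Fin 3 → ℤ), ∑' (p : Fin 3 → ℤ), G3 m k p) := by
            simp only [ENNReal.tsum_add]
        _ = K * (ENNReal.ofReal ND * (ENNReal.ofReal NA * ENNReal.ofReal NA))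
            + K * (ENNReal.ofReal NC * (ENNReal.ofReal ND * ENNReal.ofReal NA))
            + K * (ENNReal.ofReal NC * (ENNReal.ofReal NC * ENNReal.ofReal ND)) := by
            rw [hfact1, hfact2, hfact3]
        _ = ENNReal.ofReal ((16 * b / 9) * (NA ^ 2 + NA * NC + NC ^ 2) * ND) := by
            have hK9 : (0:ℝ) ≤ 16/9*b := by positivity
            have t1 : K * (ENNReal.ofReal ND * (ENNReal.ofReal NA * ENNReal.ofReal NA))
                = ENNReal.ofReal (16/9*b * (ND * (NA * NA))) := by
              rw [hK, ENNReal.ofReal_mul hK9, ENNReal.ofReal_mul hND0, ENNReal.ofReal_mul hNA0]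
            have t2 : K * (ENNReal.ofReal NC * (ENNReal.ofReal ND * ENNReal.ofReal NA))
                = ENNReal.ofReal (16/9*b * (NC * (ND * NA))) := by
              rw [hK, ENNReal.ofReal_mul hK9, ENNReal.ofReal_mul hNC0, ENNReal.ofReal_mul hND0]
            have t3 : K * (ENNReal.ofReal NC * (ENNReal.ofReal NC * ENNReal.ofReal ND))
                = ENNReal.ofReal (16/9*b * (NC * (NC * ND))) := by
              rw [hK, ENNReal.ofReal_mul hK9, ENNReal.ofReal_mul hNC0, ENNReal.ofReal_mul hNC0]
            have n1 : (0:ℝ) ≤ 16/9*b * (ND * (NA * NA)) :=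
              mul_nonneg hK9 (mul_nonneg hND0 (mul_nonneg hNA0 hNA0))
            have n2 : (0:ℝ) ≤ 16/9*b * (NC * (ND * NA)) :=
              mul_nonneg hK9 (mul_nonneg hNC0 (mul_nonneg hND0 hNA0))
            have n3 : (0:ℝ) ≤ 16/9*b * (NC * (NC * ND)) :=
              mul_nonneg hK9 (mul_nonneg hNC0 (mul_nonneg hNC0 hND0))
            rw [t1, t2, t3, ← ENNReal.ofReal_add n1 n2,
              ← ENNReal.ofReal_add (by linarith) n3]
            congr 1
            ring
    exact (ENNReal.ofReal_le_ofReal_iff hRHS0).mp hmain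
  · -- non-summable case: the left side is zero
    have : wienerNorm L (fun m => hartreeNL L Vhat a m - hartreeNL L Vhat c m) = 0 := by
      rw [wienerNorm]
      exact tsum_eq_zero_of_not_summable hS
    rw [this]
    exact hRHS0

end
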